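/- Every strong quasi-transitive digraph is a semicomplete composition: if D is a strong quasi-transitive digraph with at least two vertices, then D = T[H_1, ..., H_t] for some semicomplete digraph T on t ≥ 2 vertices and digraphs H_1, ..., H_t, where each H_i is either a single vertex or a non-strong quasi-transitive digraph. -/

import Mathlib

variable {V : Type*}

/-- A digraph (given by its arc relation) is strongly connected. -/
def Strong (A : V → V → Prop) : Prop :=
  ∀ x y : V, Relation.ReflTransGen A x y

/-- `B` is an out-branching of the digraph `A` rooted at `r`:
a spanning subdigraph in which every vertex is reachable from `r`,
every vertex other than `r` has in-degree exactly one, and `r` has in-degree zero. -/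
def IsOutBranching (A B : V → V → Prop) (r : V) : Prop :=
  (∀ x y, B x y → A x y) ∧
  (∀ v, Relation.ReflTransGen B r v) ∧
  (∀ v, v ≠ r → Nat.card {u : V // B u v} = 1) ∧
  (∀ u, ¬ B u r)

/-- `B` is an in-branching of the digraph `A` rooted at `r`. -/
def IsInBranching (A B : V → V → Prop) (r : V) : Prop :=
  (∀ x y, B x y → A x y) ∧
  (∀ v, Relation.ReflTransGen B v r) ∧
  (∀ v, v ≠ r → Nat.card {u : V // B v u} = 1) ∧
  (∀ u, ¬ B r u)

/-- A good pair rooted at `r`: arc-disjoint out- and in-branchings rooted at `r`. -/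
def GoodPair (A : V → V → Prop) (r : V) : Prop :=
  ∃ Bp Bm : V → V → Prop, IsOutBranching A Bp r ∧ IsInBranching A Bm r ∧
    ∀ x y, ¬ (Bp x y ∧ Bm x y)

/-- Arc relation of the composition `T[H_1, …, H_t]`. -/
def CompArc {t : ℕ} (T : Fin t → Fin t → Prop) (n : Fin t → ℕ)
    (H : ∀ i : Fin t, Fin (n i) → Fin (n i) → Prop)
    (x y : (i : Fin t) × Fin (n i)) : Prop :=
  (∃ h : x.1 = y.1, H y.1 (h ▸ x.2) y.2) ∨ (x.1 ≠ y.1 ∧ T x.1 y.1)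

/-- A semicomplete digraph: some arc between every pair of distinct vertices. -/
def Semicomplete {α : Type*} (T : α → α → Prop) : Prop :=
  ∀ x y : α, x ≠ y → T x y ∨ T y x

/-- A quasi-transitive digraph. -/
def QuasiTransitive (D : V → V → Prop) : Prop :=
  ∀ x y z : V, x ≠ z → D x y → D y z → D x z ∨ D z x

/-!
Let `G` be the complement of the underlying graph of `D`. Vertices in different components of `G`
are adjacent in `D`, and two `G`-adjacent vertices have, by quasi-transitivity, the same in- and
out-arcs to every vertex adjacent to both; so all arcs between two components point the same way
and `D` is the composition of its semicomplete quotient over the components of `G`.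

The heart of the matter is that `G` is disconnected whenever `D` is strong, quasi-transitive and
has two vertices. A shortest path between nonadjacent vertices `x ⇝ y` has the shape
`x → s → t → y` with `y → s` and `t → x`. If `G` were connected, choose `u` whose deletion keeps
`G` connected and a `G`-neighbour `w` of `u`; these paths reroute every walk through `u` via `w`,
so `D - u` is again strong, and by induction on `|V|` it is the single vertex `w`, although the
path `u → s → t → w` has `s ∉ {u, w}`. Applied to one component, the same fact shows that every
part with at least two vertices is not strong.
-/

open Function SimpleGraph Relation

variable {W : Type*}

theorem SimpleGraph.compl_fromRel_adj {D : V → V → Prop} {x y : V} :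
    (fromRel D)ᶜ.Adj x y ↔ x ≠ y ∧ ¬ D x y ∧ ¬ D y x := by
  rw [compl_adj, fromRel_adj]
  tauto

theorem SimpleGraph.not_compl_fromRel_adj {D : V → V → Prop} {x y : V} :
    ¬ (fromRel D)ᶜ.Adj x y ↔ x = y ∨ D x y ∨ D y x := by
  rw [compl_fromRel_adj]
  tauto

theorem SimpleGraph.compl_fromRel_onFun {D : V → V → Prop} {f : W → V} (hf : Injective f) :
    (fromRel (D on f))ᶜ = (fromRel D)ᶜ.comap f := by
  ext a b
  simp [hf.ne_iff, onFun]

theorem SimpleGraph.adj_of_not_reachable_compl {H : SimpleGraph V} {x y : V}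
    (h : ¬ Hᶜ.Reachable x y) : H.Adj x y := by
  by_contra hxy
  obtain rfl | hne := eq_or_ne x y
  · exact h .rfl
  · exact h ((compl_adj H x y).2 ⟨hne, hxy⟩).reachable

theorem QuasiTransitive.onFun {D : V → V → Prop} (hqt : QuasiTransitive D) {f : W → V}
    (hf : Injective f) : QuasiTransitive (D on f) :=
  fun a b c hac => hqt (f a) (f b) (f c) (hf.ne hac)

section Distance

variable {D : V → V → Prop} {x a b c y : V} {i j k : ℕ}

def ReachIn (D : V → V → Prop) (x : V) : ℕ → V → Prop
  | 0, y => y = x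
  | n + 1, y => ∃ z, ReachIn D x n z ∧ D z y

def IsDist (D : V → V → Prop) (x y : V) (k : ℕ) : Prop :=
  ReachIn D x k y ∧ ∀ m < k, ¬ ReachIn D x m y

theorem IsDist.exists_of_reflTransGen (h : ReflTransGen D x y) : ∃ k, IsDist D x y k := by
  classical
  have hex : ∃ n, ReachIn D x n y := by
    induction h with
    | refl => exact ⟨0, rfl⟩
    | tail _ hcy ih =>
      obtain ⟨n, hn⟩ := ih
      exact ⟨n + 1, _, hn, hcy⟩
  exact ⟨Nat.find hex, Nat.find_spec hex, fun m hm => Nat.find_min hex hm⟩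

theorem IsDist.eq_of_zero (h : IsDist D x a 0) : a = x := h.1

theorem IsDist.exists_pred (hb : IsDist D x b (k + 1)) : ∃ a, IsDist D x a k ∧ D a b := by
  obtain ⟨a, ha, hab⟩ := hb.1
  exact ⟨a, ⟨ha, fun m hm ham => hb.2 (m + 1) (by omega) ⟨a, ham, hab⟩⟩, hab⟩

theorem IsDist.ne_and_not_arc (ha : IsDist D x a i) (hc : IsDist D x c j) (hij : i + 2 ≤ j) :
    a ≠ c ∧ ¬ D a c :=
  ⟨by rintro rfl; exact hc.2 i (by omega) ha.1,
   fun hac => hc.2 (i + 1) (by omega) ⟨a, ha.1, hac⟩⟩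

theorem QuasiTransitive.arc_down_of_isDist (hqt : QuasiTransitive D) (hab : D a b) (hbc : D b c)
    (ha : IsDist D x a i) (hc : IsDist D x c j) (hji : j + 2 ≤ i) : D a c :=
  (hqt a b c (hc.ne_and_not_arc ha hji).1.symm hab hbc).resolve_right
    (hc.ne_and_not_arc ha hji).2

theorem QuasiTransitive.arc_back_of_isDist (hqt : QuasiTransitive D) (hab : D a b)
    (hbc : D b c) (ha : IsDist D x a i) (hc : IsDist D x c j) (hij : i + 2 ≤ j) : D c a :=
  (hqt a b c (ha.ne_and_not_arc hc hij).1 hab hbc).resolve_left (ha.ne_and_not_arc hc hij).2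

/-- Quasi-transitivity pushes an arc from `y` into layer `j` down to layer `j - 2` (to layer `2`
when `j = 3`), and eventually onto `x`. -/
theorem QuasiTransitive.not_arc_of_isDist (hqt : QuasiTransitive D) (hy : IsDist D x y k)
    (hyx : ¬ D y x) : ∀ j a, IsDist D x a j → 2 ≤ j → j + 2 ≤ k → ¬ D y a := by
  intro j
  induction j using Nat.strong_induction_on with
  | _ j ih =>
  intro a ha hj hjk hya
  obtain ⟨j, rfl⟩ : ∃ j', j = j' + 2 := ⟨j - 2, by omega⟩
  obtain ⟨b, hb, hba⟩ := ha.exists_pred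
  obtain ⟨c, hc, hcb⟩ := hb.exists_pred
  have hyc : D y c :=
    hqt.arc_down_of_isDist hya (hqt.arc_back_of_isDist hcb hba hc ha le_rfl) hy hc (by omega)
  rcases j with _ | _ | j
  · exact hyx (hc.eq_of_zero ▸ hyc)
  · exact ih 2 (by omega) b hb le_rfl (by omega) (hqt.arc_down_of_isDist hyc hcb hy hb (by omega))
  · exact ih (j + 2) (by omega) c hc (by omega) (by omega) hyc

/-- A shortest path from `x` to `y` has length three, and quasi-transitivity turns its chords
backwards. -/
theorem QuasiTransitive.exists_path_three_of_compl_adj (hqt : QuasiTransitive D)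
    (hxy : (fromRel D)ᶜ.Adj x y) (hr : ReflTransGen D x y) :
    ∃ s t, D x s ∧ D s t ∧ D t y ∧ D y s ∧ D t x := by
  obtain ⟨hne, hDxy, hDyx⟩ := compl_fromRel_adj.1 hxy
  obtain ⟨k, hy⟩ := IsDist.exists_of_reflTransGen hr
  rcases k with _ | _ | _ | k
  · exact absurd hy.eq_of_zero.symm hne
  · obtain ⟨a, ha, hay⟩ := hy.exists_pred
    exact absurd (ha.eq_of_zero ▸ hay) hDxy
  · obtain ⟨a, ha, hay⟩ := hy.exists_pred
    obtain ⟨b, hb, hba⟩ := ha.exists_pred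
    obtain rfl := hb.eq_of_zero
    exact ((hqt b a y hne hba hay).elim hDxy hDyx).elim
  · obtain ⟨t, ht, hty⟩ := hy.exists_pred
    obtain ⟨s, hs, hst⟩ := ht.exists_pred
    have hys : D y s := hqt.arc_back_of_isDist hst hty hs hy le_rfl
    rcases k with _ | k
    · obtain ⟨r, hr, hrs⟩ := hs.exists_pred
      obtain rfl := hr.eq_of_zero
      exact ⟨s, t, hrs, hst, hty, hys, hqt.arc_back_of_isDist hrs hst hr ht le_rfl⟩
    · exact absurd hys (hqt.not_arc_of_isDist hy hDyx _ s hs (by omega) (by omega))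

end Distance

section DeleteVertex

variable {D : V → V → Prop} {u : V} {w : ({u}ᶜ : Set V)}

theorem QuasiTransitive.reflTransGen_compl_singleton_of_arc_to (hqt : QuasiTransitive D)
    (hs : Strong D) (huw : (fromRel D)ᶜ.Adj u w) {p : ({u}ᶜ : Set V)} (hpu : D p u) :
    ReflTransGen (D on (↑)) p w := by
  obtain ⟨hne, hDuw, hDwu⟩ := compl_fromRel_adj.1 huw
  by_cases hpw : (fromRel D)ᶜ.Adj p w
  · obtain ⟨s, t, hps, hst, htw, hws, -⟩ := hqt.exists_path_three_of_compl_adj hpw (hs p w)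
    have hsu : s ≠ u := by rintro rfl; exact hDwu hws
    have htu : t ≠ u := by rintro rfl; exact hDuw htw
    exact .head (b := ⟨s, hsu⟩) hps (.head (b := ⟨t, htu⟩) hst (.single htw))
  · rcases not_compl_fromRel_adj.1 hpw with hpw | hpw | hwp
    · rw [Subtype.ext hpw]
    · exact .single hpw
    · exact ((hqt w p u hne.symm hwp hpu).elim hDwu hDuw).elim

theorem QuasiTransitive.reflTransGen_compl_singleton_of_arc_from (hqt : QuasiTransitive D)
    (hs : Strong D) (huw : (fromRel D)ᶜ.Adj u w) {q : ({u}ᶜ : Set V)} (huq : D u q) :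
    ReflTransGen (D on (↑)) w q := by
  obtain ⟨hne, hDuw, hDwu⟩ := compl_fromRel_adj.1 huw
  by_cases hwq : (fromRel D)ᶜ.Adj w q
  · obtain ⟨s, t, hws, hst, htq, -, htw⟩ := hqt.exists_path_three_of_compl_adj hwq (hs w q)
    have hsu : s ≠ u := by rintro rfl; exact hDwu hws
    have htu : t ≠ u := by rintro rfl; exact hDuw htw
    exact .head (b := ⟨s, hsu⟩) hws (.head (b := ⟨t, htu⟩) hst (.single htq))
  · rcases not_compl_fromRel_adj.1 hwq with hwq | hwq | hqw
    · rw [Subtype.ext hwq]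
    · exact .single hwq
    · exact ((hqt u q w hne huq hqw).elim hDuw hDwu).elim

/-- A walk through `u` is rerouted through `w`: `p → u → q` becomes `p ⇝ w ⇝ q`. -/
theorem QuasiTransitive.strong_compl_singleton (hqt : QuasiTransitive D) (hs : Strong D)
    (huw : (fromRel D)ᶜ.Adj u w) : Strong (D on ((↑) : ({u}ᶜ : Set V) → V)) := by
  intro a b
  have key : ∀ y, ReflTransGen D a y →
      (y = u ∧ ReflTransGen (D on (↑)) a w) ∨
        ∃ hy : y ≠ u, ReflTransGen (D on (↑)) a ⟨y, hy⟩ := by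
    intro y hy
    induction hy with
    | refl => exact .inr ⟨a.2, .refl⟩
    | @tail c y _ hcy ih =>
      by_cases hyu : y = u
      · refine .inl ⟨hyu, ?_⟩
        rcases ih with ⟨rfl, haw⟩ | ⟨hc, hac⟩
        · exact haw
        · exact hac.trans (hqt.reflTransGen_compl_singleton_of_arc_to hs huw (p := ⟨c, hc⟩)
            (hyu ▸ hcy))
      · refine .inr ⟨hyu, ?_⟩
        rcases ih with ⟨rfl, haw⟩ | ⟨hc, hac⟩
        · exact haw.trans (hqt.reflTransGen_compl_singleton_of_arc_from hs huw
            (q := ⟨y, hyu⟩) hcy)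
        · exact hac.tail hcy
  rcases key b (hs a b) with ⟨hbu, -⟩ | ⟨_, hab⟩
  · exact absurd hbu b.2
  · exact hab

end DeleteVertex

theorem QuasiTransitive.subsingleton_of_connected_compl [Finite V] {D : V → V → Prop}
    (hqt : QuasiTransitive D) (hs : Strong D) (hconn : (fromRel D)ᶜ.Connected) :
    Subsingleton V := by
  induction V using Finite.induction_subsingleton_or_nontrivial with
  | hbase => infer_instance
  | hstep V ih =>
  obtain ⟨u, hu⟩ := hconn.exists_connected_induce_compl_singleton_of_finite_nontrivial
  obtain ⟨w, huw⟩ := hconn.preconnected.exists_adj_of_nontrivial u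
  have hwu : w ∈ ({u}ᶜ : Set V) := huw.ne.symm
  have hlt : Nat.card ({u}ᶜ : Set V) < Nat.card V := Finite.card_subtype_lt (x := u) (by simp)
  have hsub : Subsingleton ({u}ᶜ : Set V) :=
    ih _ hlt (hqt.onFun Subtype.val_injective)
      (hqt.strong_compl_singleton hs (w := ⟨w, hwu⟩) huw)
      (by rwa [compl_fromRel_onFun Subtype.val_injective])
  obtain ⟨-, hDuw, hDwu⟩ := compl_fromRel_adj.1 huw
  obtain ⟨s, -, hus, -, -, hws, -⟩ := hqt.exists_path_three_of_compl_adj huw (hs u w)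
  have hsu : s ≠ u := by rintro rfl; exact hDwu hws
  have hsw : s ≠ w := by rintro rfl; exact hDuw hus
  exact absurd (Subtype.ext_iff.1 (hsub.elim ⟨s, hsu⟩ ⟨w, hwu⟩)) hsw

theorem QuasiTransitive.not_strong_onFun [Finite W] [Nontrivial W] {D : V → V → Prop}
    (hqt : QuasiTransitive D) {g : W → V} (hg : Injective g)
    (hconn : ((fromRel D)ᶜ.induce (Set.range g)).Connected) : ¬ Strong (D on g) := fun hs =>
  not_subsingleton W <| (hqt.onFun hg).subsingleton_of_connected_compl hs <| by
    rw [compl_fromRel_onFun hg]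
    exact (Embedding.comap ⟨g, hg⟩ _).isoInduceRange.connected_iff.2 hconn

theorem QuasiTransitive.one_lt_card_connectedComponent [Finite V] [Nontrivial V]
    {D : V → V → Prop} (hqt : QuasiTransitive D) (hs : Strong D) :
    1 < Nat.card (fromRel D)ᶜ.ConnectedComponent := by
  obtain ⟨x, y, hxy⟩ : ∃ x y, ¬ (fromRel D)ᶜ.Reachable x y := by
    have := mt (hqt.subsingleton_of_connected_compl hs) (not_subsingleton V)
    simpa [connected_iff, Preconnected] using this
  exact Finite.one_lt_card_iff_nontrivial.2 ⟨_, _, mt ConnectedComponent.exact hxy⟩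

section Twins

variable {D : V → V → Prop} {c c' x x' y y' : V}

theorem QuasiTransitive.arc_imp_of_compl_adj (hqt : QuasiTransitive D)
    (hcc' : (fromRel D)ᶜ.Adj c c') (hc'y : (fromRel D).Adj c' y) :
    (D c y → D c' y) ∧ (D y c → D y c') := by
  obtain ⟨hne, hDcc', hDc'c⟩ := compl_fromRel_adj.1 hcc'
  obtain ⟨-, hy⟩ := (fromRel_adj D c' y).1 hc'y
  refine ⟨fun hcy => hy.resolve_right fun hyc' => ?_, fun hyc => hy.resolve_left fun hc'y => ?_⟩
  · exact (hqt c y c' hne hcy hyc').elim hDcc' hDc'c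
  · exact (hqt c' y c hne.symm hc'y hyc).elim hDc'c hDcc'

theorem QuasiTransitive.arc_iff_of_reachable_left (hqt : QuasiTransitive D)
    (hx : (fromRel D)ᶜ.Reachable x x') (hxy : ¬ (fromRel D)ᶜ.Reachable x y) :
    (D x y ↔ D x' y) ∧ (D y x ↔ D y x') := by
  rw [reachable_iff_reflTransGen] at hx hxy
  induction hx with
  | refl => exact ⟨.rfl, .rfl⟩
  | @tail c c' hxc hcc' ih =>
    have hcy : ¬ (fromRel D)ᶜ.Reachable c y := by
      rw [reachable_iff_reflTransGen]; exact fun h => hxy (hxc.trans h)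
    have hc'y : ¬ (fromRel D)ᶜ.Reachable c' y := by
      rw [reachable_iff_reflTransGen]; exact fun h => hxy ((hxc.tail hcc').trans h)
    have h := hqt.arc_imp_of_compl_adj hcc' (adj_of_not_reachable_compl hc'y)
    have h' := hqt.arc_imp_of_compl_adj hcc'.symm (adj_of_not_reachable_compl hcy)
    exact ⟨ih.1.trans ⟨h.1, h'.1⟩, ih.2.trans ⟨h.2, h'.2⟩⟩

theorem QuasiTransitive.arc_iff_of_reachable (hqt : QuasiTransitive D)
    (hx : (fromRel D)ᶜ.Reachable x x') (hy : (fromRel D)ᶜ.Reachable y y')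
    (hxy : ¬ (fromRel D)ᶜ.Reachable x y) : D x y ↔ D x' y' :=
  (hqt.arc_iff_of_reachable_left hx hxy).1.trans
    (hqt.arc_iff_of_reachable_left hy fun h => hxy (hx.trans h.symm)).2

end Twins

theorem exists_equiv_sigma_fin_fst_eq [Fintype V] {t : ℕ} (f : V → Fin t) :
    ∃ (n : Fin t → ℕ) (e : V ≃ (i : Fin t) × Fin (n i)), ∀ x, (e x).1 = f x := by
  classical
  exact ⟨fun i => Fintype.card {x // f x = i},
    (Equiv.sigmaFiberEquiv f).symm.trans (Equiv.sigmaCongrRight fun _ => Fintype.equivFin _),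
    fun _ => rfl⟩

theorem range_symm_sigma_mk {β : W → Type*} (e : V ≃ Σ i, β i) (i : W) :
    Set.range (fun a => e.symm ⟨i, a⟩) = {v | (e v).1 = i} := by
  ext v
  constructor
  · rintro ⟨a, rfl⟩
    simp
  · intro hv
    obtain ⟨⟨j, b⟩, rfl⟩ := e.symm.surjective v
    simp only [Set.mem_ofPred_eq, Equiv.apply_symm_apply] at hv
    exact ⟨hv ▸ b, by subst hv; rfl⟩

theorem compArc_iff {t : ℕ} {n : Fin t → ℕ} (e : V ≃ (i : Fin t) × Fin (n i))
    {D : V → V → Prop} {T : Fin t → Fin t → Prop}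
    (hT : ∀ x y, (e x).1 ≠ (e y).1 → (D x y ↔ T (e x).1 (e y).1)) (x y : V) :
    D x y ↔ CompArc T n (fun i => D on fun a => e.symm ⟨i, a⟩) (e x) (e y) := by
  obtain ⟨⟨i, a⟩, rfl⟩ := e.symm.surjective x
  obtain ⟨⟨j, b⟩, rfl⟩ := e.symm.surjective y
  have := hT (e.symm ⟨i, a⟩) (e.symm ⟨j, b⟩)
  simp only [Equiv.apply_symm_apply] at this ⊢
  obtain rfl | hij := eq_or_ne i j
  · simp [CompArc, onFun]
  · simp [CompArc, hij, this hij]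

section Components

variable {D : V → V → Prop} {ι : Type*} {f : V → ι}

theorem semicomplete_map_of_reachable_iff (hf : ∀ x y, f x = f y ↔ (fromRel D)ᶜ.Reachable x y)
    (hsurj : Surjective f) :
    Semicomplete (Relation.Map D f f) := by
  intro i j hij
  obtain ⟨x, rfl⟩ := hsurj i
  obtain ⟨y, rfl⟩ := hsurj j
  rcases ((fromRel_adj D x y).1 (adj_of_not_reachable_compl (mt (hf x y).2 hij))).2 with h | h
  exacts [.inl ⟨x, y, h, rfl, rfl⟩, .inr ⟨y, x, h, rfl, rfl⟩]

theorem QuasiTransitive.map_iff_of_reachable_iff (hqt : QuasiTransitive D)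
    (hf : ∀ x y, f x = f y ↔ (fromRel D)ᶜ.Reachable x y) {x y : V} (hxy : f x ≠ f y) :
    Relation.Map D f f (f x) (f y) ↔ D x y := by
  refine ⟨fun ⟨x', y', h, hx', hy'⟩ => ?_, fun h => ⟨x, y, h, rfl, rfl⟩⟩
  refine (hqt.arc_iff_of_reachable ((hf x' x).1 hx') ((hf y' y).1 hy') fun h' => ?_).1 h
  exact hxy (hx' ▸ hy' ▸ (hf x' y').2 h')

theorem connected_induce_fiber_of_reachable_iff
    (hf : ∀ x y, f x = f y ↔ (fromRel D)ᶜ.Reachable x y) (x : V) :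
    ((fromRel D)ᶜ.induce {y | f y = f x}).Connected := by
  have hsupp : {y | f y = f x} = ((fromRel D)ᶜ.connectedComponentMk x).supp := by
    ext y
    simp only [Set.mem_ofPred_eq, hf, ConnectedComponent.mem_supp_iff, ConnectedComponent.eq]
  rw [hsupp]
  exact ConnectedComponent.connected_toSimpleGraph _

end Components

theorem QuasiTransitive.eq_one_or_not_strong_fiber {D : V → V → Prop}
    (hqt : QuasiTransitive D) {t : ℕ} {n : Fin t → ℕ} {f : V → Fin t}
    (hf : ∀ x y, f x = f y ↔ (fromRel D)ᶜ.Reachable x y)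
    (hsurj : Surjective f) (e : V ≃ (i : Fin t) × Fin (n i)) (he : ∀ x, (e x).1 = f x)
    (i : Fin t) :
    n i = 1 ∨ (QuasiTransitive (D on fun a => e.symm ⟨i, a⟩) ∧
      ¬ Strong (D on fun a => e.symm ⟨i, a⟩)) := by
  have hinj := e.symm.injective.comp (sigma_mk_injective (i := i))
  refine (eq_or_ne (n i) 1).imp id fun hi => ⟨hqt.onFun hinj, ?_⟩
  obtain ⟨v, rfl⟩ := hsurj i
  have : Nontrivial (Fin (n (f v))) := by
    have := (e v).2.pos
    rw [he] at this
    exact Fin.nontrivial_iff_two_le.2 (by omega)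
  refine hqt.not_strong_onFun hinj ?_
  rw [range_symm_sigma_mk e (f v), show {x | (e x).1 = f v} = {x | f x = f v} by simp only [he]]
  exact connected_induce_fiber_of_reachable_iff hf v

/-- Every strong quasi-transitive digraph with at least two vertices is a
semicomplete composition `T[H_1,…,H_t]` with `t ≥ 2`, where each `H i` is a
single vertex or a non-strong quasi-transitive digraph. -/
theorem stmt14 [Fintype V] (D : V → V → Prop) (hqt : QuasiTransitive D)
    (hs : Strong D) (h2 : 2 ≤ Fintype.card V) :
    ∃ (t : ℕ) (_ : 2 ≤ t) (T : Fin t → Fin t → Prop) (n : Fin t → ℕ)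
      (H : ∀ i : Fin t, Fin (n i) → Fin (n i) → Prop)
      (e : V ≃ (i : Fin t) × Fin (n i)),
      Semicomplete T ∧
      (∀ i, n i = 1 ∨ (QuasiTransitive (H i) ∧ ¬ Strong (H i))) ∧
      ∀ x y, D x y ↔ CompArc T n H (e x) (e y) := by
  set G := (fromRel D)ᶜ
  have : Nontrivial V := Fintype.one_lt_card_iff_nontrivial.1 h2
  let f : V → Fin (Nat.card G.ConnectedComponent) :=
    fun v => Finite.equivFin _ (G.connectedComponentMk v)
  have hf : ∀ x y, f x = f y ↔ G.Reachable x y := fun x y => by simp [f]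
  have hsurj : Surjective f := (Finite.equivFin _).surjective.comp Quot.mk_surjective
  obtain ⟨n, e, he⟩ := exists_equiv_sigma_fin_fst_eq f
  refine ⟨_, hqt.one_lt_card_connectedComponent hs, Relation.Map D f f, n, _, e,
    semicomplete_map_of_reachable_iff hf hsurj, hqt.eq_one_or_not_strong_fiber hf hsurj e he,
    compArc_iff e fun x y hxy => ?_⟩
  rw [he, he] at hxy ⊢
  exact (hqt.map_iff_of_reachable_iff hf hxy).symm
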